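/- arXiv:2308.11539 — 5 statements merged into one kernel-verified Lean document; each statement's English description precedes it below -/
import Mathlib

section
/- Let x, y > 0 be reals, d a positive integer, and r ≥ log(x)/log(y). Let Ψ_r(x,y,d) be the number of positive integers n ≤ x that can be written as a product of at most r primes (with multiplicity), each prime ≤ y and not dividing d. Then Ψ_r(x,y,d) ≥ binomial(π(y) − π(z) − ω_y(d) + ⌊log(x)/log(y)⌋, π(y) − π(z) − ω_y(d)), where z = x^{1/r}, π(t) is the prime counting function, and ω_y(d) is the number of distinct prime divisors of d that are ≤ y. -/
/-!
Fix a set `T` of `k` primes at most `y` not dividing `d`; there are at least `k` of them, since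
removing the `ω_y(d)` prime divisors of `d` from the `π(y)` primes up to `y` leaves enough.
Multisets of size `m = ⌊log x / log y⌋` over `T ∪ {1}` number `C(k + m, k)`. Discarding the
`1`s, each gives a product of at most `m ≤ r` primes `≤ y`, hence a number `≤ y ^ m ≤ x`, and
unique factorisation makes these products pairwise distinct.
-/

open Real Finset

theorem Multiset.prod_filter_ne_one {α : Type*} [CommMonoid α] [DecidableEq α] (M : Multiset α) :
    (M.filter (· ≠ 1)).prod = M.prod := by
  rw [← prod_filter_mul_prod_filter_not (s := M) (· ≠ 1),
    prod_eq_one (s := M.filter _) fun a ha => not_not.mp (mem_filter.mp ha).2, mul_one]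

namespace Nat

theorem multiset_eq_of_prod_eq {M N : Multiset ℕ} (hM : ∀ p ∈ M, p.Prime)
    (hN : ∀ p ∈ N, p.Prime) (h : M.prod = N.prod) : M = N := by
  rw [← UniqueFactorizationMonoid.normalizedFactors_prod_of_prime fun p hp => (hM p hp).prime, h,
    UniqueFactorizationMonoid.normalizedFactors_prod_of_prime fun p hp => (hN p hp).prime]

theorem multiset_eq_of_prod_eq_of_card_eq {M N : Multiset ℕ} (hM : ∀ a ∈ M, a = 1 ∨ a.Prime)
    (hN : ∀ a ∈ N, a = 1 ∨ a.Prime) (hcard : Multiset.card M = Multiset.card N)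
    (h : M.prod = N.prod) : M = N := by
  have hprime : ∀ L : Multiset ℕ, (∀ a ∈ L, a = 1 ∨ a.Prime) → ∀ p ∈ L.filter (· ≠ 1), p.Prime :=
    fun L hL p hp =>
      (hL p (Multiset.mem_of_mem_filter hp)).resolve_left (Multiset.mem_filter.mp hp).2
  have hne : M.filter (· ≠ 1) = N.filter (· ≠ 1) :=
    multiset_eq_of_prod_eq (hprime M hM) (hprime N hN) (by
      rw [Multiset.prod_filter_ne_one, Multiset.prod_filter_ne_one, h])
  have hones : ∀ L : Multiset ℕ, L.filter (¬ · ≠ 1) =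
      Multiset.replicate (Multiset.card L - Multiset.card (L.filter (· ≠ 1))) 1 := fun L => by
    have hsplit := congrArg Multiset.card (Multiset.filter_add_not (· ≠ 1) L)
    rw [Multiset.card_add] at hsplit
    exact Multiset.eq_replicate.mpr
      ⟨by omega, fun a ha => not_not.mp (Multiset.mem_filter.mp ha).2⟩
  rw [← Multiset.filter_add_not (· ≠ 1) M, ← Multiset.filter_add_not (· ≠ 1) N, hones M, hones N,
    hne, hcard]

theorem choose_le_card_of_multiset_prod_mem {S : Finset ℕ} (hS : ∀ p ∈ S, p.Prime) (m : ℕ)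
    {A : Set ℕ} (hA : A.Finite)
    (h : ∀ M : Multiset ℕ, Multiset.card M ≤ m → (∀ p ∈ M, p ∈ S) → M.prod ∈ A) :
    (#S + m).choose #S ≤ Nat.card A := by
  classical
  have : Finite A := hA.to_subtype
  set T : Finset ℕ := insert 1 S
  have hT : ∀ a ∈ T, a = 1 ∨ a.Prime := fun a ha => (mem_insert.mp ha).imp_right (hS a)
  have hcardT : Fintype.card T = #S + 1 := by
    rw [Fintype.card_coe, card_insert_of_notMem fun h1 => Nat.not_prime_one (hS 1 h1)]
  let toMultiset : Sym T m → Multiset ℕ := fun σ => (σ : Multiset T).map Subtype.val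
  have hmem : ∀ σ, ∀ a ∈ toMultiset σ, a ∈ T := fun σ a ha => by
    obtain ⟨b, -, rfl⟩ := Multiset.mem_map.mp ha
    exact b.2
  have hcard : ∀ σ, Multiset.card (toMultiset σ) = m := fun σ => by
    rw [Multiset.card_map]
    exact σ.2
  have hprod : ∀ σ, (toMultiset σ).prod ∈ A := fun σ => by
    rw [← Multiset.prod_filter_ne_one]
    refine h _ ((Multiset.card_le_card (Multiset.filter_le _ _)).trans (hcard σ).le) fun p hp => ?_
    exact (mem_insert.mp (hmem σ p (Multiset.mem_of_mem_filter hp))).resolve_left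
      (Multiset.mem_filter.mp hp).2
  let f : Sym T m → A := fun σ => ⟨(toMultiset σ).prod, hprod σ⟩
  have hf : Function.Injective f := fun σ τ hστ =>
    Sym.coe_injective <| Multiset.map_injective Subtype.val_injective <|
      multiset_eq_of_prod_eq_of_card_eq (fun a ha => hT a (hmem σ a ha))
        (fun a ha => hT a (hmem τ a ha)) ((hcard σ).trans (hcard τ).symm)
        (congrArg Subtype.val hστ)
  calc (#S + m).choose #S = Fintype.card (Sym T m) := by
        rw [Sym.card_sym_eq_choose, hcardT, Nat.add_right_comm, Nat.add_sub_cancel,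
          Nat.choose_symm_add]
    _ = Nat.card (Sym T m) := Nat.card_eq_fintype_card.symm
    _ ≤ Nat.card A := Nat.card_le_card_of_injective f hf

theorem card_primesLE_filter_not_dvd {d : ℕ} (hd : d ≠ 0) (n : ℕ) :
    #{p ∈ primesLE n | ¬ p ∣ d} = primeCounting n - #{q ∈ d.primeFactors | q ≤ n} := by
  have hdvd : {p ∈ primesLE n | p ∣ d} = {q ∈ d.primeFactors | q ≤ n} := by
    ext p
    simp only [mem_filter, mem_primesLE, mem_primeFactors]
    tauto
  rw [← primesLE_card_eq_primeCounting,
    ← card_filter_add_card_filter_not (s := primesLE n) (· ∣ d), hdvd, Nat.add_sub_cancel_left]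

end Nat

theorem pow_floor_log_div_log_le {x y : ℝ} (hx : 1 ≤ x) (hy : 1 < y) :
    y ^ ⌊log x / log y⌋₊ ≤ x := by
  have hlogy : 0 < log y := log_pos hy
  rw [pow_le_iff_le_log (by linarith) (by linarith), ← le_div_iff₀ hlogy]
  exact Nat.floor_le (div_nonneg (log_nonneg hx) hlogy.le)

theorem cast_multiset_prod_le_of_card_le_floor {x y : ℝ} (hx : 1 ≤ x) {M : Multiset ℕ}
    (hM : ∀ p ∈ M, p.Prime ∧ (p : ℝ) ≤ y) (hcard : Multiset.card M ≤ ⌊log x / log y⌋₊) :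
    (M.prod : ℝ) ≤ x := by
  obtain rfl | ⟨q, hq⟩ := M.empty_or_exists_mem
  · simpa using hx
  have hy : (2 : ℝ) ≤ y := le_trans (mod_cast (hM q hq).1.two_le) (hM q hq).2
  have hMy : M.prod ≤ ⌊y⌋₊ ^ Multiset.card M :=
    Multiset.prod_le_pow_card M _ fun p hp => Nat.le_floor (hM p hp).2
  calc (M.prod : ℝ) ≤ (⌊y⌋₊ : ℝ) ^ Multiset.card M := mod_cast hMy
    _ ≤ y ^ Multiset.card M := pow_le_pow_left₀ (Nat.cast_nonneg _) (Nat.floor_le (by linarith)) _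
    _ ≤ y ^ ⌊log x / log y⌋₊ := pow_le_pow_right₀ (by linarith) hcard
    _ ≤ x := pow_floor_log_div_log_le hx (by linarith)

theorem smooth_count_lower_bound_general (x y : ℝ) (hx : 1 ≤ x)
    (d : ℕ) (hd : 0 < d) (r : ℕ) (hr : Real.log x / Real.log y ≤ (r : ℝ)) :
    let z : ℝ := x ^ ((r : ℝ)⁻¹)
    let k : ℕ := Nat.primeCounting ⌊y⌋₊ - Nat.primeCounting ⌊z⌋₊ -
      (d.primeFactors.filter fun q : ℕ => ((q : ℝ) ≤ y)).card
    let m : ℕ := ⌊Real.log x / Real.log y⌋₊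
    (k + m).choose k ≤
      Nat.card {n : ℕ | 0 < n ∧ (n : ℝ) ≤ x ∧
        ∃ M : Multiset ℕ, M.prod = n ∧ M.card ≤ r ∧
          ∀ q ∈ M, q.Prime ∧ (q : ℝ) ≤ y ∧ ¬ q ∣ d} := by
  intro z k m
  have hmr : m ≤ r := by simpa using Nat.floor_le_floor hr
  have hω : #{q ∈ d.primeFactors | q ≤ ⌊y⌋₊} ≤
      #(d.primeFactors.filter fun q : ℕ => (q : ℝ) ≤ y) :=
    card_le_card <| monotone_filter_right _ fun q hq hqy =>
      (Nat.le_floor_iff' (Nat.prime_of_mem_primeFactors hq).ne_zero).mp hqy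
  have hk : k ≤ #{p ∈ Nat.primesLE ⌊y⌋₊ | ¬ p ∣ d} := by
    rw [Nat.card_primesLE_filter_not_dvd hd.ne']
    omega
  obtain ⟨T, hTsub, hTcard⟩ := exists_subset_card_eq hk
  have hT : ∀ p ∈ T, p.Prime ∧ (p : ℝ) ≤ y ∧ ¬ p ∣ d := fun p hp => by
    obtain ⟨hp, hpd⟩ := mem_filter.mp (hTsub hp)
    obtain ⟨hpy, hprime⟩ := Nat.mem_primesLE.mp hp
    exact ⟨hprime, (Nat.le_floor_iff' hprime.ne_zero).mp hpy, hpd⟩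
  rw [← hTcard]
  refine Nat.choose_le_card_of_multiset_prod_mem (fun p hp => (hT p hp).1) m
    ((Set.finite_Iic ⌊x⌋₊).subset fun n hn => Nat.le_floor hn.2.1) fun M hM hMT => ?_
  have hMprime : ∀ q ∈ M, q.Prime ∧ (q : ℝ) ≤ y ∧ ¬ q ∣ d := fun q hq => hT q (hMT q hq)
  refine ⟨Nat.pos_of_ne_zero <| Multiset.prod_ne_zero fun h0 => Nat.not_prime_zero (hMprime 0 h0).1,
    cast_multiset_prod_le_of_card_le_floor hx
      (fun q hq => ⟨(hMprime q hq).1, (hMprime q hq).2.1⟩) hM,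
    M, rfl, hM.trans hmr, hMprime⟩

/-- Lower bound on the number of `(y, r, d)`-smooth integers up to `x`.
`Ψ_r(x,y,d)` counts the positive integers `n ≤ x` which are products of at most
`r` primes (with multiplicity), each at most `y` and not dividing `d`.  With
`z = x^{1/r}`, `π` the prime counting function and `ω_y(d)` the number of
distinct prime divisors of `d` that are at most `y`, if `r ≥ log x / log y` then
`Ψ_r(x,y,d) ≥ C(π(y) − π(z) − ω_y(d) + ⌊log x / log y⌋, π(y) − π(z) − ω_y(d))`. -/
theorem smooth_count_lower_bound (x y : ℝ) (hx : 1 ≤ x) (hy : 0 < y)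
    (d : ℕ) (hd : 0 < d) (r : ℕ) (hr : Real.log x / Real.log y ≤ (r : ℝ)) :
    let z : ℝ := x ^ ((r : ℝ)⁻¹)
    let k : ℕ := Nat.primeCounting ⌊y⌋₊ - Nat.primeCounting ⌊z⌋₊ -
      (d.primeFactors.filter fun q : ℕ => ((q : ℝ) ≤ y)).card
    let m : ℕ := ⌊Real.log x / Real.log y⌋₊
    (k + m).choose k ≤
      Nat.card {n : ℕ | 0 < n ∧ (n : ℝ) ≤ x ∧
        ∃ M : Multiset ℕ, M.prod = n ∧ M.card ≤ r ∧
          ∀ q ∈ M, q.Prime ∧ (q : ℝ) ≤ y ∧ ¬ q ∣ d} :=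
  smooth_count_lower_bound_general x y hx d hd r hr
end

section
/- Let 𝔒 = ℤ[ω] be an imaginary quadratic order with discriminant Δ_𝔒 ∉ {−3, −4}, where ω has trace t ∈ {0,1} and norm n = N(ω) = (t² + |Δ_𝔒|)/4. Let θ = a + ω with a ∈ ℤ, |a| ≤ √n, and suppose N(θ) is not a perfect square. Then the only elements α ∈ 𝔒 with N(α) = N(θ) are α ∈ {θ, −θ, θ̄, −θ̄}, where θ̄ denotes the complex conjugate. -/
/-!
Completing the square gives `4 N(b + cω) = (2b − tc)² + Δc²`. The bound `a² ≤ n`, together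
with `Δ ≠ 3` (which rules out `t = 1, n = 1`), gives `(2a − t)² < 3Δ`, hence `4 N(θ) < 4Δ`, so
any `α` of the same norm has `|c| ≤ 1`. The case `c = 0` would make `N(θ) = b²` a square, and for
`c = ±1` the equation `N(α) = N(θ)` factors as `(b − ac)(b − (t − a)c) = 0`.
-/

theorem four_mul_norm_eq_sq_add (t n b c : ℤ) :
    4 * (b ^ 2 - t * b * c + c ^ 2 * n) = (2 * b - t * c) ^ 2 + (4 * n - t ^ 2) * c ^ 2 := by
  ring

theorem sq_two_mul_sub_lt_three_mul_disc {t n a : ℤ} (ht : t = 0 ∨ t = 1)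
    (hΔpos : 0 < 4 * n - t ^ 2) (hΔ3 : 4 * n - t ^ 2 ≠ 3) (ha : a ^ 2 ≤ n) :
    (2 * a - t) ^ 2 < 3 * (4 * n - t ^ 2) := by
  rcases ht with rfl | rfl
  · nlinarith
  · have hn : 2 ≤ n := by omega
    have ha' : -a ≤ a ^ 2 := by nlinarith [sq_nonneg (2 * a + 1)]
    nlinarith

theorem abs_le_one_of_sq_add_mul_sq_eq {Δ x y c : ℤ} (hΔ : 0 < Δ) (hy : y ^ 2 < 3 * Δ)
    (h : x ^ 2 + Δ * c ^ 2 = y ^ 2 + Δ) : |c| ≤ 1 := by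
  have hc : c ^ 2 < 2 ^ 2 := by nlinarith [sq_nonneg x]
  have := abs_lt_of_sq_lt_sq hc (by norm_num)
  omega

theorem eq_mul_or_eq_sub_mul_of_norm_eq {t n a b c : ℤ} (hc : c ^ 2 = 1)
    (h : b ^ 2 - t * b * c + c ^ 2 * n = a ^ 2 - t * a + n) :
    b = a * c ∨ b = (t - a) * c := by
  have hf : (b - a * c) * (b - (t - a) * c) = 0 := by
    linear_combination h + (t * a - a ^ 2 - n) * hc
  rcases mul_eq_zero.mp hf with hf | hf
  · exact .inl (by linarith)
  · exact .inr (by linarith)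

theorem norm_equal_only_conjugates_general (t n Δ a : ℤ)
    (ht : t = 0 ∨ t = 1) (hΔ : Δ = 4 * n - t ^ 2) (hΔpos : 0 < Δ)
    (hΔ3 : Δ ≠ 3)
    (ha : a ^ 2 ≤ n)
    (hns : ¬ ∃ m : ℤ, m ^ 2 = a ^ 2 - t * a + n) :
    ∀ b c : ℤ, b ^ 2 - t * b * c + c ^ 2 * n = a ^ 2 - t * a + n →
      (b = a ∧ c = 1) ∨ (b = t - a ∧ c = 1) ∨
      (b = -a ∧ c = -1) ∨ (b = a - t ∧ c = -1) := by
  subst hΔ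
  intro b c h
  have hsq : (2 * b - t * c) ^ 2 + (4 * n - t ^ 2) * c ^ 2 =
      (2 * a - t) ^ 2 + (4 * n - t ^ 2) := by
    linear_combination (four_mul_norm_eq_sq_add t n b c).symm + 4 * h
  have hc := abs_le_one_of_sq_add_mul_sq_eq hΔpos
    (sq_two_mul_sub_lt_three_mul_disc ht hΔpos hΔ3 ha) hsq
  obtain rfl | rfl | rfl := Int.abs_le_one_iff.mp hc
  · exact absurd ⟨b, by linarith⟩ hns
  · rcases eq_mul_or_eq_sub_mul_of_norm_eq (by norm_num) h with rfl | rfl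
    · exact .inl ⟨by ring, rfl⟩
    · exact .inr <| .inl ⟨by ring, rfl⟩
  · rcases eq_mul_or_eq_sub_mul_of_norm_eq (by norm_num) h with rfl | rfl
    · exact .inr <| .inr <| .inl ⟨by ring, rfl⟩
    · exact .inr <| .inr <| .inr ⟨by ring, rfl⟩

/-- Let `𝔒 = ℤ[ω]` be an imaginary quadratic order of discriminant
`Δ_𝔒 ∉ {−3, −4}` (we write `Δ = |Δ_𝔒| = 4n − t²`), where `ω` has trace
`t ∈ {0,1}` and norm `n = N(ω)`, so that `N(b + cω) = b² − tbc + c²n`.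
Let `θ = a + ω` with `a ∈ ℤ`, `|a| ≤ √n`, and suppose `N(θ) = a² − ta + n`
is not a perfect square.  Then the only elements `α = b + cω ∈ 𝔒` with
`N(α) = N(θ)` are `α ∈ {θ, −θ, θ̄, −θ̄}`, i.e.
`(b, c) ∈ {(a, 1), (t − a, 1), (−a, −1), (a − t, −1)}`. -/
theorem norm_equal_only_conjugates (t n Δ a : ℤ)
    (ht : t = 0 ∨ t = 1) (hΔ : Δ = 4 * n - t ^ 2) (hΔpos : 0 < Δ)
    (hΔ3 : Δ ≠ 3) (hΔ4 : Δ ≠ 4)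
    (ha : a ^ 2 ≤ n)
    (hns : ¬ ∃ m : ℤ, m ^ 2 = a ^ 2 - t * a + n) :
    ∀ b c : ℤ, b ^ 2 - t * b * c + c ^ 2 * n = a ^ 2 - t * a + n →
      (b = a ∧ c = 1) ∨ (b = t - a ∧ c = 1) ∨
      (b = -a ∧ c = -1) ∨ (b = a - t ∧ c = -1) :=
  norm_equal_only_conjugates_general t n Δ a ht hΔ hΔpos hΔ3 ha hns
end

section
/- Let 𝒪 be a maximal order in the quaternion algebra B_{p,∞} ramified exactly at an odd prime p and infinity. Suppose j₁ : 𝔒₁ ↪ 𝒪 and j₂ : 𝔒₂ ↪ 𝒪 are two primitive (optimal) embeddings of orders 𝔒₁, 𝔒₂ in the same imaginary quadratic field K, with discriminants Δ₁ and Δ₂. If j₁(𝔒₁) ≠ j₂(𝔒₂), then Δ₁·Δ₂ ≥ p². -/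
open Quaternion

noncomputable section

variable {c₁ c₂ : ℚ}

/-- Reduced trace on a quaternion algebra over `ℚ`. -/
def trd (x : ℍ[ℚ, c₁, c₂]) : ℚ := 2 * x.re

/-- Reduced norm on a quaternion algebra over `ℚ`. -/
def nrd (x : ℍ[ℚ, c₁, c₂]) : ℚ := (x * star x).re

/-- `ℍ[ℚ, c₁, c₂]` is the quaternion algebra ramified exactly at `p` and `∞`. -/
def IsBpInfty (p : ℕ) [Fact p.Prime] (c₁ c₂ : ℚ) : Prop :=
  (∀ x : ℍ[ℝ, (c₁ : ℝ), (c₂ : ℝ)], x ≠ 0 → IsUnit x) ∧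
  (∀ x : ℍ[ℚ_[p], (c₁ : ℚ_[p]), (c₂ : ℚ_[p])], x ≠ 0 → IsUnit x) ∧
  ∀ (ℓ : ℕ) (hℓ : ℓ.Prime), ℓ ≠ p →
    ¬ (letI : Fact ℓ.Prime := ⟨hℓ⟩;
       ∀ x : ℍ[ℚ_[ℓ], (c₁ : ℚ_[ℓ]), (c₂ : ℚ_[ℓ])], x ≠ 0 → IsUnit x)

/-- An order in `ℍ[ℚ, c₁, c₂]`: a subring which is a full `ℤ`-lattice. -/
def IsOrder (O : Subring ℍ[ℚ, c₁, c₂]) : Prop :=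
  ∃ e : Module.Basis (Fin 4) ℚ ℍ[ℚ, c₁, c₂],
    ∀ x : ℍ[ℚ, c₁, c₂], x ∈ O ↔ ∃ c : Fin 4 → ℤ, x = ∑ i, (c i : ℚ) • e i

/-- A maximal order. -/
def IsMaximalOrder (O : Subring ℍ[ℚ, c₁, c₂]) : Prop :=
  IsOrder O ∧ ∀ O' : Subring ℍ[ℚ, c₁, c₂], IsOrder O' → O ≤ O' → O' = O

/-- `α ∈ O` defines a primitive (optimal) embedding of the quadratic order `ℤ[α]`:
no element of `O` lying in `ℚ[α]` is outside `ℤ[α]`. -/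
def IsPrimitiveEmbedding (O : Subring ℍ[ℚ, c₁, c₂]) (α : ℍ[ℚ, c₁, c₂]) : Prop :=
  α ∈ O ∧ ∀ β ∈ O, (∃ u v : ℚ, β = u • (1 : ℍ[ℚ, c₁, c₂]) + v • α) →
    ∃ u v : ℤ, β = (u : ℚ) • (1 : ℍ[ℚ, c₁, c₂]) + (v : ℚ) • α

end

/-!
Put `ξᵢ = 2 · im αᵢ`: these are pure quaternions with `nrd ξᵢ = -Δᵢ`, and
`σ = re (ξ₁ ξ̄₂) = 2 trd (α₁ ᾱ₂) - t₁ t₂` is an integer because elements of an order have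
integral reduced trace.

Since `B` is definite, `nrd` is a positive definite quadratic form, so Cauchy–Schwarz gives
`σ² < Δ₁ Δ₂` unless `ξ₁, ξ₂` are proportional; in that case `α₁, α₂` generate the same
quadratic field and primitivity forces `ℤ[α₁] = ℤ[α₂]`.

Since `B` is ramified at `p`, `p ∣ Δ₁ Δ₂ - σ²`: otherwise the binary form `-nrd` on
`ℤ ξ₁ + ℤ ξ₂` is nondegenerate mod `p`, so it takes a value `k ≡ 1 (mod p)`. By Hensel `k` is
a square `μ²` in `ℚ_p`, and a pure `v` with `v² = μ²` gives the zero divisor `(v - μ)(v + μ)`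
in the division algebra `B ⊗ ℚ_p`.

Finally write `Δ₁ Δ₂ = m²`. Then `m ≡ σ (mod 2)`, so `p` divides `(m - σ)/2` or `(m + σ)/2`,
both nonzero and smaller than `|m|` in absolute value; hence `p < |m|`.
-/

namespace QuaternionAlgebra

section CommRing

variable {R S : Type*} [CommRing R] [CommRing S] {a b : R}

def map (f : R →+* S) : ℍ[R,a,b] →+* ℍ[S,f a,f b] where
  toFun x := ⟨f x.re, f x.imI, f x.imJ, f x.imK⟩
  map_one' := by ext <;> simp
  map_mul' x y := by ext <;> simp
  map_zero' := by ext <;> simp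
  map_add' x y := by ext <;> simp

theorem re_map (f : R →+* S) (x : ℍ[R,a,b]) : (map f x).re = f x.re := rfl

theorem map_coe (f : R →+* S) (r : R) : map f (r : ℍ[R,a,b]) = (f r : ℍ[S,f a,f b]) := by
  ext <;> simp [map]

theorem eq_coe_or_eq_neg_coe_of_mul_self_eq {c₁ c₂ c₃ : R}
    (hdiv : ∀ x : ℍ[R,c₁,c₂,c₃], x ≠ 0 → IsUnit x) {x : ℍ[R,c₁,c₂,c₃]} {μ : R}
    (h : x * x = ↑(μ * μ)) : x = μ ∨ x = -μ := by
  have : NoZeroDivisors ℍ[R,c₁,c₂,c₃] :=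
    ⟨fun {y z} hyz => or_iff_not_imp_left.2 fun hy => (hdiv y hy).mul_right_eq_zero.1 hyz⟩
  rw [coe_mul] at h
  exact (Commute.mul_self_eq_mul_self_iff (a := x) (b := (μ : ℍ[R,c₁,c₂,c₃]))
    (coe_commutes μ x).symm).1 h

theorem not_isSquare_of_forall_isUnit [Nontrivial R]
    (hdiv : ∀ x : ℍ[R,a,b], x ≠ 0 → IsUnit x) : ¬ IsSquare a ∧ ¬ IsSquare b := by
  constructor
  · rintro ⟨μ, rfl⟩
    rcases eq_coe_or_eq_neg_coe_of_mul_self_eq hdiv (x := ⟨0, 1, 0, 0⟩) (μ := μ)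
      (by ext <;> simp) with h | h <;> simpa using congrArg imI h
  · rintro ⟨μ, rfl⟩
    rcases eq_coe_or_eq_neg_coe_of_mul_self_eq hdiv (x := ⟨0, 0, 1, 0⟩) (μ := μ)
      (by ext <;> simp) with h | h <;> simpa using congrArg imJ h

theorem mul_self_eq_coe_of_re_eq_zero {x : ℍ[R,a,b]} (hx : x.re = 0) :
    x * x = ↑(-(x * star x).re) := by
  ext <;>
    simp only [re_mul, imI_mul, imJ_mul, imK_mul, re_star, imI_star, imJ_star, imK_star,
      re_coe, imI_coe, imJ_coe, imK_coe, hx] <;>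
    ring

theorem re_smul_add_smul_mul_star (s t : R) (x y : ℍ[R,a,b]) :
    ((s • x + t • y) * star (s • x + t • y)).re =
      s ^ 2 * (x * star x).re + 2 * s * t * (x * star y).re + t ^ 2 * (y * star y).re := by
  simp only [star_add, star_smul', re_mul, re_add, imI_add, imJ_add, imK_add, re_smul, imI_smul,
    imJ_smul, imK_smul, re_star, imI_star, imJ_star, imK_star, smul_eq_mul]
  ring

theorem re_im_mul_star_im (x y : ℍ[R,a,b]) :
    (x.im * star y.im).re = (x * star y).re - x.re * y.re := by
  simp only [re_mul, re_star, imI_star, imJ_star, imK_star, re_im, imI_im, imJ_im, imK_im]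
  ring

theorem re_pow_three (x : ℍ[R,a,b]) : (x ^ 3).re = 3 * x.re * (x ^ 2).re - 2 * x.re ^ 3 := by
  simp only [pow_succ, pow_zero, one_mul, re_mul, imI_mul, imJ_mul, imK_mul]
  ring

theorem trace_mulLeft (x : ℍ[R,a,b]) :
    LinearMap.trace R _ (LinearMap.mulLeft R x) = 4 * x.re := by
  rw [LinearMap.trace_eq_matrix_trace R (basisOneIJK a 0 b), Matrix.trace, Fin.sum_univ_four]
  simp only [Matrix.diag, LinearMap.toMatrix_apply, coe_basisOneIJK_repr, LinearMap.mulLeft_apply]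
  simp only [basisOneIJK, Module.Basis.coe_ofEquivFun, coe_linearEquivTuple_symm,
    equivTuple_symm_apply, Pi.single_eq_same, ne_eq, Fin.reduceEq, not_false_eq_true,
    Pi.single_eq_of_ne, Matrix.cons_val_zero, Matrix.cons_val_one, Matrix.cons_val,
    re_mul, imI_mul, imJ_mul, imK_mul]
  ring

end CommRing

section LinearOrderedField

variable {K : Type*} [Field K] [LinearOrder K] [IsStrictOrderedRing K] {a b : K}

theorem re_mul_star_self_pos (ha : a < 0) (hb : b < 0) {x : ℍ[K,a,b]} (hx : x ≠ 0) :
    0 < (x * star x).re := by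
  have hre : (x * star x).re =
      x.re ^ 2 + (-a) * x.imI ^ 2 + (-b) * x.imJ ^ 2 + (a * b) * x.imK ^ 2 := by
    simp only [re_mul, re_star, imI_star, imJ_star, imK_star]
    ring
  have ha' : 0 < -a := neg_pos.2 ha
  have hb' : 0 < -b := neg_pos.2 hb
  have hab : 0 < a * b := mul_pos_of_neg_of_neg ha hb
  have h0 := sq_nonneg x.re
  have h1 := mul_nonneg ha'.le (sq_nonneg x.imI)
  have h2 := mul_nonneg hb'.le (sq_nonneg x.imJ)
  have h3 := mul_nonneg hab.le (sq_nonneg x.imK)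
  rw [hre]
  by_contra! hle
  refine hx (QuaternionAlgebra.ext ?_ ?_ ?_ ?_)
  · exact pow_eq_zero_iff two_ne_zero |>.1 (by linarith)
  · exact pow_eq_zero_iff two_ne_zero |>.1 <| (mul_eq_zero.1 (by linarith)).resolve_left ha'.ne'
  · exact pow_eq_zero_iff two_ne_zero |>.1 <| (mul_eq_zero.1 (by linarith)).resolve_left hb'.ne'
  · exact pow_eq_zero_iff two_ne_zero |>.1 <| (mul_eq_zero.1 (by linarith)).resolve_left hab.ne'

theorem sq_re_mul_star_lt_or_eq_smul (ha : a < 0) (hb : b < 0) {x : ℍ[K,a,b]} (hx : x ≠ 0)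
    (y : ℍ[K,a,b]) :
    (x * star y).re ^ 2 < (x * star x).re * (y * star y).re ∨ ∃ q : K, y = q • x := by
  set N := (x * star x).re
  set B := (x * star y).re
  have hN : 0 < N := re_mul_star_self_pos ha hb hx
  -- the norm of `B • x - N • y` is `N * (N * (y * star y).re - B ^ 2)`
  by_cases hw : B • x + (-N) • y = 0
  · have hNy : N • y = B • x := by
      rw [neg_smul, ← sub_eq_add_neg, sub_eq_zero] at hw
      exact hw.symm
    refine .inr ⟨B / N, ?_⟩
    rw [div_eq_inv_mul, mul_smul, ← hNy, smul_smul, inv_mul_cancel₀ hN.ne', one_smul]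
  · have := re_mul_star_self_pos ha hb hw
    rw [re_smul_add_smul_mul_star] at this
    left
    nlinarith

end LinearOrderedField

theorem neg_of_forall_isUnit_real {a b : ℝ} (hdiv : ∀ x : ℍ[ℝ,a,b], x ≠ 0 → IsUnit x) :
    a < 0 ∧ b < 0 := by
  have hsq {c : ℝ} (hc : ¬ IsSquare c) : c < 0 :=
    lt_of_not_ge fun h => hc ⟨√c, (Real.mul_self_sqrt h).symm⟩
  obtain ⟨ha, hb⟩ := not_isSquare_of_forall_isUnit hdiv
  exact ⟨hsq ha, hsq hb⟩

end QuaternionAlgebra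

open QuaternionAlgebra

theorem exists_trace_mulLeft_eq_intCast {A ι : Type*} [Ring A] [Algebra ℚ A] [Fintype ι]
    (e : Module.Basis ι ℚ A) {O : Subring A}
    (he : ∀ x, x ∈ O ↔ ∃ c : ι → ℤ, x = ∑ i, (c i : ℚ) • e i) {γ : A} (hγ : γ ∈ O) :
    ∃ z : ℤ, LinearMap.trace ℚ A (LinearMap.mulLeft ℚ γ) = z := by
  classical
  have he_mem (i : ι) : e i ∈ O := (he _).2 ⟨Pi.single i 1, by simp [Pi.single_apply]⟩
  choose c hc using fun i => (he (γ * e i)).1 (mul_mem hγ (he_mem i))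
  refine ⟨∑ i, c i i, ?_⟩
  rw [LinearMap.trace_eq_matrix_trace ℚ e, Matrix.trace]
  push_cast
  refine Finset.sum_congr rfl fun i _ => ?_
  rw [Matrix.diag, LinearMap.toMatrix_apply, LinearMap.mulLeft_apply, hc i,
    e.repr_sum_self (fun j => (c i j : ℚ))]

section Rational

variable {c₁ c₂ : ℚ}

theorem nrd_two_smul_im (x : ℍ[ℚ,c₁,c₂]) : nrd ((2 : ℚ) • x.im) = 4 * nrd x - trd x ^ 2 := by
  rw [nrd, star_smul', smul_mul_smul_comm, QuaternionAlgebra.re_smul, re_im_mul_star_im]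
  simp only [nrd, trd, smul_eq_mul]
  ring

theorem re_two_smul_im_mul_star_two_smul_im (x y : ℍ[ℚ,c₁,c₂]) :
    ((2 : ℚ) • x.im * star ((2 : ℚ) • y.im)).re = 2 * trd (x * star y) - trd x * trd y := by
  rw [star_smul', smul_mul_smul_comm, QuaternionAlgebra.re_smul, re_im_mul_star_im]
  simp only [trd, smul_eq_mul]
  ring

end Rational

section Order

variable {c₁ c₂ : ℚ} {O : Subring ℍ[ℚ,c₁,c₂]}

theorem IsOrder.exists_trd_eq_intCast (hO : IsOrder O) {γ : ℍ[ℚ,c₁,c₂]} (hγ : γ ∈ O) :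
    ∃ t : ℤ, trd γ = t := by
  obtain ⟨e, he⟩ := hO
  have h4re {δ : ℍ[ℚ,c₁,c₂]} (hδ : δ ∈ O) : ∃ z : ℤ, 4 * δ.re = z := by
    simpa [trace_mulLeft] using exists_trace_mulLeft_eq_intCast e he hδ
  obtain ⟨z₁, h₁⟩ := h4re hγ
  obtain ⟨z₂, h₂⟩ := h4re (pow_mem hγ 2)
  obtain ⟨z₃, h₃⟩ := h4re (pow_mem hγ 3)
  -- only `4 re γ` is integral a priori; this relation forces it to be even
  have hcube : z₁ ^ 3 = 2 * (3 * z₁ * z₂ - 4 * z₃) := by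
    have : (z₁ : ℚ) ^ 3 = 2 * (3 * z₁ * z₂ - 4 * z₃) := by
      rw [← h₁, ← h₂, ← h₃, re_pow_three]; ring
    exact_mod_cast this
  obtain ⟨w, hw⟩ := (Int.even_pow.1 ⟨_, hcube.trans (two_mul _)⟩).1
  refine ⟨w, ?_⟩
  have : (z₁ : ℚ) = w + w := by exact_mod_cast hw
  rw [trd]
  linarith

theorem IsOrder.star_mem (hO : IsOrder O) {γ : ℍ[ℚ,c₁,c₂]} (hγ : γ ∈ O) : star γ ∈ O := by
  obtain ⟨t, ht⟩ := hO.exists_trd_eq_intCast hγ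
  have : star γ = ((t : ℤ) : ℍ[ℚ,c₁,c₂]) - γ := by
    rw [star_eq_two_re_sub]
    ext <;> simp [← ht, trd]
  rw [this]
  exact sub_mem (intCast_mem O t) hγ

theorem IsPrimitiveEmbedding.exists_int_of_im_eq_smul {α β : ℍ[ℚ,c₁,c₂]}
    (hα : IsPrimitiveEmbedding O α) (hβ : β ∈ O) {q : ℚ} (h : β.im = q • α.im)
    {x : ℍ[ℚ,c₁,c₂]} (hx : ∃ u v : ℤ, x = (u : ℚ) • (1 : ℍ[ℚ,c₁,c₂]) + (v : ℚ) • β) :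
    ∃ u v : ℤ, x = (u : ℚ) • (1 : ℍ[ℚ,c₁,c₂]) + (v : ℚ) • α := by
  obtain ⟨u, v, rfl⟩ := hx
  obtain ⟨u₀, v₀, hβα⟩ := hα.2 β hβ ⟨β.re - q * α.re, q, by
    rw [← re_add_im β, h, ← re_add_im α]
    ext <;> simp⟩
  exact ⟨u + v * u₀, v * v₀, by rw [hβα]; push_cast; module⟩

theorem IsPrimitiveEmbedding.zspan_iff_of_im_eq_smul {α β : ℍ[ℚ,c₁,c₂]}
    (hα : IsPrimitiveEmbedding O α) (hβ : IsPrimitiveEmbedding O β) {q : ℚ} (hq : q ≠ 0)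
    (h : β.im = q • α.im) (x : ℍ[ℚ,c₁,c₂]) :
    (∃ u v : ℤ, x = (u : ℚ) • (1 : ℍ[ℚ,c₁,c₂]) + (v : ℚ) • α) ↔
      (∃ u v : ℤ, x = (u : ℚ) • (1 : ℍ[ℚ,c₁,c₂]) + (v : ℚ) • β) :=
  ⟨hβ.exists_int_of_im_eq_smul hα.1 (by rw [h, smul_smul, inv_mul_cancel₀ hq, one_smul]),
    hα.exists_int_of_im_eq_smul hβ.1 h⟩

theorem IsPrimitiveEmbedding.sq_re_mul_star_lt (hc₁ : c₁ < 0) (hc₂ : c₂ < 0)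
    {α β : ℍ[ℚ,c₁,c₂]} (hα : IsPrimitiveEmbedding O α) (hβ : IsPrimitiveEmbedding O β)
    (hne : ¬ ∀ x : ℍ[ℚ,c₁,c₂],
      (∃ u v : ℤ, x = (u : ℚ) • (1 : ℍ[ℚ,c₁,c₂]) + (v : ℚ) • α) ↔
        (∃ u v : ℤ, x = (u : ℚ) • (1 : ℍ[ℚ,c₁,c₂]) + (v : ℚ) • β))
    (hα0 : nrd ((2 : ℚ) • α.im) ≠ 0) (hβ0 : nrd ((2 : ℚ) • β.im) ≠ 0) :
    ((2 : ℚ) • α.im * star ((2 : ℚ) • β.im)).re ^ 2 <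
      nrd ((2 : ℚ) • α.im) * nrd ((2 : ℚ) • β.im) := by
  have hne0 {x : ℍ[ℚ,c₁,c₂]} (hx : nrd x ≠ 0) : x ≠ 0 := by
    rintro rfl
    exact hx (by rw [nrd, zero_mul, QuaternionAlgebra.re_zero])
  rcases sq_re_mul_star_lt_or_eq_smul hc₁ hc₂ (hne0 hα0) ((2 : ℚ) • β.im) with h | ⟨q, hq⟩
  · exact h
  · have hq0 : q ≠ 0 := by
      rintro rfl
      exact hne0 hβ0 (hq.trans (zero_smul _ _))
    rw [smul_comm] at hq
    exact absurd (hα.zspan_iff_of_im_eq_smul hβ hq0 (smul_right_injective _ two_ne_zero hq)) hne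

end Order

open Polynomial in
theorem FiniteField.exists_binary_quadratic_eq {F : Type*} [Field F] [Fintype F]
    (hF : Fintype.card F % 2 = 1) {A B C : F} (hdisc : B ^ 2 - 4 * A * C ≠ 0) (c : F) :
    ∃ x y : F, A * x ^ 2 + B * x * y + C * y ^ 2 = c := by
  have h2 : (2 : F) ≠ 0 :=
    Ring.two_ne_zero fun h => by rw [FiniteField.even_card_iff_char_two.1 h] at hF; simp at hF
  by_cases hA : A = 0
  · have hB : B ≠ 0 := by rintro rfl; simp [hA] at hdisc
    exact ⟨(c - C) / B, 1, by rw [hA]; field_simp; ring⟩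
  · obtain ⟨s, t, hst⟩ := exists_root_sum_quadratic (degree_X_pow 2)
      (degree_quadratic (a := -(B ^ 2 - 4 * A * C)) (b := 0) (c := -(4 * A * c))
        (neg_ne_zero.2 hdisc)) hF
    simp only [eval_add, eval_mul, eval_pow, eval_X, eval_C] at hst
    set x := (s - B * t) / (2 * A)
    have hx : 2 * A * x = s - B * t := mul_div_cancel₀ _ (mul_ne_zero h2 hA)
    refine ⟨x, t, mul_left_cancel₀ (mul_ne_zero (mul_ne_zero h2 h2) hA) ?_⟩
    -- completing the square: `4A(Ax² + Bxt + Ct²) = (2Ax + Bt)² - (B² - 4AC)t²`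
    linear_combination hst + (2 * A * x + B * t + s) * hx

open Polynomial in
theorem PadicInt.exists_sq_eq_of_dvd_sub_sq {p : ℕ} [Fact p.Prime] (hp2 : p ≠ 2) {k s : ℤ}
    (hs : ¬ (p : ℤ) ∣ s) (h : (p : ℤ) ∣ k - s ^ 2) : ∃ μ : ℤ_[p], μ ^ 2 = k := by
  have hp : Prime (p : ℤ) := Nat.prime_iff_prime_int.1 Fact.out
  have hp2' : ¬ (p : ℤ) ∣ 2 := fun h2 =>
    hp2 <| (Nat.prime_dvd_prime_iff_eq Fact.out Nat.prime_two).1 (by exact_mod_cast h2)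
  have hF : ‖(X ^ 2 - C k : ℤ[X]).aeval (s : ℤ_[p])‖ < 1 := by
    have : (X ^ 2 - C k : ℤ[X]).aeval (s : ℤ_[p]) = ((-(k - s ^ 2) : ℤ) : ℤ_[p]) := by simp
    rwa [this, norm_int_lt_one_iff_dvd, dvd_neg]
  have hF' : ‖(X ^ 2 - C k : ℤ[X]).derivative.aeval (s : ℤ_[p])‖ = 1 := by
    have : (X ^ 2 - C k : ℤ[X]).derivative.aeval (s : ℤ_[p]) = ((2 * s : ℤ) : ℤ_[p]) := by
      simp [map_ofNat]
    rw [this]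
    refine le_antisymm (norm_le_one _) (not_lt.1 fun hlt => ?_)
    rcases hp.dvd_or_dvd ((norm_int_lt_one_iff_dvd _).1 hlt) with h2 | h2
    exacts [hp2' h2, hs h2]
  obtain ⟨μ, hμ, -⟩ :=
    hensels_lemma (F := X ^ 2 - C k) (a := (s : ℤ_[p])) (by rwa [hF', one_pow])
  exact ⟨μ, by simpa [sub_eq_zero] using hμ⟩

section Ramified

variable {p : ℕ} [Fact p.Prime] {c₁ c₂ : ℚ}

theorem not_dvd_sub_one_of_mul_self_eq (hp2 : p ≠ 2)
    (hdiv : ∀ x : ℍ[ℚ_[p], (c₁ : ℚ_[p]), (c₂ : ℚ_[p])], x ≠ 0 → IsUnit x)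
    {v : ℍ[ℚ,c₁,c₂]} (hv : v.re = 0) {k : ℤ} (hk : v * v = ((k : ℚ) : ℍ[ℚ,c₁,c₂])) :
    ¬ (p : ℤ) ∣ k - 1 := by
  intro hdvd
  have hp1 : ¬ (p : ℤ) ∣ 1 := (Nat.prime_iff_prime_int.1 Fact.out).not_dvd_one
  obtain ⟨μ, hμ⟩ := PadicInt.exists_sq_eq_of_dvd_sub_sq hp2 hp1 (by rwa [one_pow])
  have hw : map (Rat.castHom ℚ_[p]) v * map (Rat.castHom ℚ_[p]) v = ↑((μ : ℚ_[p]) * μ) := by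
    rw [← map_mul, hk, map_coe, ← sq, ← PadicInt.coe_pow, hμ]
    simp
  have hμ0 : (μ : ℚ_[p]) = 0 := by
    rcases eq_coe_or_eq_neg_coe_of_mul_self_eq hdiv hw with h | h <;>
      simpa [hv] using (congrArg QuaternionAlgebra.re h).symm.trans (re_map _ v)
  have hk0 : k = 0 := by
    have : (k : ℚ_[p]) = 0 := by rw [← PadicInt.coe_intCast, ← hμ, PadicInt.coe_pow, hμ0]; simp
    exact_mod_cast this
  exact hp1 (by simpa [hk0] using hdvd)

theorem prime_dvd_nrd_mul_nrd_sub_sq (hp2 : p ≠ 2)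
    (hdiv : ∀ x : ℍ[ℚ_[p], (c₁ : ℚ_[p]), (c₂ : ℚ_[p])], x ≠ 0 → IsUnit x)
    {ξ η : ℍ[ℚ,c₁,c₂]} (hξ : ξ.re = 0) (hη : η.re = 0) {P Q S : ℤ}
    (hP : nrd ξ = P) (hQ : nrd η = Q) (hS : (ξ * star η).re = S) :
    (p : ℤ) ∣ P * Q - S ^ 2 := by
  by_contra hndvd
  have hcard : Fintype.card (ZMod p) % 2 = 1 := by
    rw [ZMod.card]; exact Nat.odd_iff.1 ((Fact.out : p.Prime).odd_of_ne_two hp2)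
  -- the form `-nrd (a ξ + b η) = -P a² - 2S ab - Q b²` is nondegenerate mod `p`
  have hdisc :
      ((-2 * S : ℤ) : ZMod p) ^ 2 - 4 * ((-P : ℤ) : ZMod p) * ((-Q : ℤ) : ZMod p) ≠ 0 := by
    have h2 : (2 : ZMod p) ≠ 0 := Ring.two_ne_zero (by rwa [ZMod.ringChar_zmod_n])
    have h : ((P * Q - S ^ 2 : ℤ) : ZMod p) ≠ 0 := by
      rwa [Ne, ZMod.intCast_zmod_eq_zero_iff_dvd]
    have key : ((-2 * S : ℤ) : ZMod p) ^ 2 - 4 * ((-P : ℤ) : ZMod p) * ((-Q : ℤ) : ZMod p) =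
        -(2 * 2) * ((P * Q - S ^ 2 : ℤ) : ZMod p) := by push_cast; ring
    rw [key]
    exact mul_ne_zero (neg_ne_zero.2 (mul_ne_zero h2 h2)) h
  obtain ⟨x, y, hxy⟩ := FiniteField.exists_binary_quadratic_eq hcard hdisc 1
  obtain ⟨a, rfl⟩ := ZMod.intCast_surjective x
  obtain ⟨b, rfl⟩ := ZMod.intCast_surjective y
  refine not_dvd_sub_one_of_mul_self_eq hp2 hdiv (v := (a : ℚ) • ξ + (b : ℚ) • η)
    (k := -(P * a ^ 2 + 2 * S * a * b + Q * b ^ 2)) (by simp [hξ, hη]) ?_ ?_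
  · rw [mul_self_eq_coe_of_re_eq_zero (by simp [hξ, hη])]
    congr 1
    rw [re_smul_add_smul_mul_star, ← nrd, ← nrd, hP, hQ, hS]
    push_cast
    ring
  · rw [← ZMod.intCast_zmod_eq_zero_iff_dvd]
    push_cast at hxy ⊢
    linear_combination hxy

end Ramified

theorem Int.sq_lt_sq_of_prime_dvd_sq_sub_sq {p : ℕ} (hp : p.Prime) (hp2 : p ≠ 2) {m σ : ℤ}
    (hlt : σ ^ 2 < m ^ 2) (hpar : Even (m ^ 2 - σ ^ 2)) (hdvd : (p : ℤ) ∣ m ^ 2 - σ ^ 2) :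
    (p : ℤ) ^ 2 < m ^ 2 := by
  have hpZ : Prime (p : ℤ) := Nat.prime_iff_prime_int.1 hp
  have hp2' : ¬ (p : ℤ) ∣ 2 := fun h2 =>
    hp2 <| (Nat.prime_dvd_prime_iff_eq hp Nat.prime_two).1 (by exact_mod_cast h2)
  suffices key : ∀ τ : ℤ, τ ^ 2 = σ ^ 2 → Even (m - τ) → (p : ℤ) ∣ m - τ → (p : ℤ) < |m| by
    have hpar' : Even (m - σ) := by
      rwa [Int.even_sub, Int.even_pow' two_ne_zero, Int.even_pow' two_ne_zero,
        ← Int.even_sub] at hpar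
    rw [← sq_abs m]
    refine pow_lt_pow_left₀ ?_ (Int.natCast_nonneg p) two_ne_zero
    rcases hpZ.dvd_or_dvd (show (p : ℤ) ∣ (m - σ) * (m - -σ) by convert hdvd using 1; ring)
      with h | h
    · exact key σ rfl hpar' h
    · refine key (-σ) (neg_sq σ) ?_ h
      rw [show m - -σ = m - σ + 2 * σ by ring]
      exact hpar'.add (even_two_mul σ)
  rintro τ hτ ⟨g, hg⟩ hdvd'
  have habs : |τ| < |m| := sq_lt_sq.1 (hτ ▸ hlt)
  have hpg : (p : ℤ) ∣ g := (hpZ.dvd_or_dvd (two_mul g ▸ hg ▸ hdvd')).resolve_left hp2'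
  have hg0 : g ≠ 0 := by rintro rfl; simp [sub_eq_zero.1 (hg.trans (add_zero 0))] at habs
  have hpg' : (p : ℤ) ≤ |g| := Int.le_of_dvd (abs_pos.2 hg0) ((dvd_abs _ _).2 hpg)
  have : 2 * |g| < 2 * |m| := by
    calc 2 * |g| = |m - τ| := by rw [hg, ← two_mul, abs_mul, abs_two]
      _ ≤ |m| + |τ| := abs_sub _ _
      _ < 2 * |m| := by linarith
  linarith

/-- **Kaneko's theorem.** Let `𝒪` be a maximal order in the quaternion algebra
`B_{p,∞}` ramified exactly at an odd prime `p` and `∞`.  If `α₁, α₂ ∈ 𝒪` define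
two primitive embeddings of orders (of discriminants `Δ₁, Δ₂`) in the same
imaginary quadratic field, with distinct images `ℤ[α₁] ≠ ℤ[α₂]`, then `Δ₁·Δ₂ ≥ p²`. -/
theorem kaneko_disc_ineq (p : ℕ) [Fact p.Prime] (hodd : Odd p) (c₁ c₂ : ℚ)
    (hB : IsBpInfty p c₁ c₂)
    (O : Subring ℍ[ℚ, c₁, c₂]) (hO : IsMaximalOrder O)
    (α₁ α₂ : ℍ[ℚ, c₁, c₂]) (t₁ n₁ t₂ n₂ : ℤ)
    (ht₁ : trd α₁ = (t₁ : ℚ)) (hn₁ : nrd α₁ = (n₁ : ℚ))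
    (ht₂ : trd α₂ = (t₂ : ℚ)) (hn₂ : nrd α₂ = (n₂ : ℚ))
    (Δ₁ Δ₂ : ℤ) (hΔ₁ : Δ₁ = t₁ ^ 2 - 4 * n₁) (hΔ₂ : Δ₂ = t₂ ^ 2 - 4 * n₂)
    (hneg₁ : Δ₁ < 0) (hneg₂ : Δ₂ < 0)
    -- the two quadratic orders lie in the same imaginary quadratic field
    (hsame : ∃ m : ℤ, Δ₁ * Δ₂ = m ^ 2)
    (hprim₁ : IsPrimitiveEmbedding O α₁) (hprim₂ : IsPrimitiveEmbedding O α₂)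
    -- the images `j₁(𝔒₁)` and `j₂(𝔒₂)` are distinct
    (hne : ¬ ∀ x : ℍ[ℚ, c₁, c₂],
        (∃ u v : ℤ, x = (u : ℚ) • (1 : ℍ[ℚ, c₁, c₂]) + (v : ℚ) • α₁) ↔
        (∃ u v : ℤ, x = (u : ℚ) • (1 : ℍ[ℚ, c₁, c₂]) + (v : ℚ) • α₂)) :
    (p : ℤ) ^ 2 ≤ Δ₁ * Δ₂ := by
  have hp2 : p ≠ 2 := by rintro rfl; exact absurd hodd (by decide)
  obtain ⟨hdivR, hdivP, -⟩ := hB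
  obtain ⟨hc₁, hc₂⟩ := neg_of_forall_isUnit_real hdivR
  have hN₁ : nrd ((2 : ℚ) • α₁.im) = ((-Δ₁ : ℤ) : ℚ) := by
    rw [nrd_two_smul_im, hn₁, ht₁, hΔ₁]; push_cast; ring
  have hN₂ : nrd ((2 : ℚ) • α₂.im) = ((-Δ₂ : ℤ) : ℚ) := by
    rw [nrd_two_smul_im, hn₂, ht₂, hΔ₂]; push_cast; ring
  obtain ⟨ρ, hρ⟩ := hO.1.exists_trd_eq_intCast (mul_mem hprim₁.1 (hO.1.star_mem hprim₂.1))
  have hS : ((2 : ℚ) • α₁.im * star ((2 : ℚ) • α₂.im)).re = ((2 * ρ - t₁ * t₂ : ℤ) : ℚ) := by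
    rw [re_two_smul_im_mul_star_two_smul_im, hρ, ht₁, ht₂]; push_cast; ring
  have hlt : (2 * ρ - t₁ * t₂) ^ 2 < Δ₁ * Δ₂ := by
    have h := hprim₁.sq_re_mul_star_lt (by exact_mod_cast hc₁) (by exact_mod_cast hc₂) hprim₂ hne
      (by rw [hN₁]; exact_mod_cast neg_ne_zero.2 hneg₁.ne)
      (by rw [hN₂]; exact_mod_cast neg_ne_zero.2 hneg₂.ne)
    rwa [hS, hN₁, hN₂, ← Int.cast_pow, ← Int.cast_mul, Int.cast_lt, neg_mul_neg] at h
  have hdvd := prime_dvd_nrd_mul_nrd_sub_sq hp2 hdivP (by simp) (by simp) hN₁ hN₂ hS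
  obtain ⟨m, hm⟩ := hsame
  rw [hm] at hlt ⊢
  refine (Int.sq_lt_sq_of_prime_dvd_sq_sub_sq Fact.out hp2 hlt
    ⟨2 * (4 * n₁ * n₂ - n₁ * t₂ ^ 2 - n₂ * t₁ ^ 2 - ρ ^ 2 + ρ * t₁ * t₂), ?_⟩ ?_).le
  · rw [← hm, hΔ₁, hΔ₂]; ring
  · rw [← hm]; convert hdvd using 1; ring
end

section
/- Let 𝒪 be a maximal order in B_{p,∞} (p odd) and 𝔒 an imaginary quadratic order with |Δ_𝔒| < p. If ι, ι′ : 𝔒 ↪ 𝒪 are two primitive embeddings, then ι′ = ι or ι′ = ῑ, where ῑ(α) := ι(ᾱ). -/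
open Quaternion

/-!
Suppose `α' ≠ α` and `α' ≠ t - α`. As roots of `X² - tX + n`, the elements `δ = α - α'` and
`σ = α + α' - t` of `O` are nonzero, have trace zero, anticommute, and satisfy `δ² + σ² = Δ`.
Since `B` is definite and `O` is an order, `δ² = -a` and `σ² = -b` with `a, b` positive
integers, so `a + b = -Δ < p`: thus `p` is odd and divides neither `a` nor `b`. Then `B ⊗ ℚ_p`
splits: a solution of `z² + aA² + bB² = 0` with `z ≠ 0` (found mod `p` by pigeonhole,
lifted by Hensel) makes `w = Aδ + Bσ` a pure quaternion with `w² = z²`, and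
`(z + w)(z - w) = 0` contradicts ramification at `p`.
-/

section SameQuadratic

variable {A : Type*} [Ring A] {t n a b : A}

theorem anticomm_of_same_quadratic (hta : Commute t a) (htb : Commute t b)
    (ha : a * a = t * a - n) (hb : b * b = t * b - n) :
    (a - b) * (a + b - t) + (a + b - t) * (a - b) = 0 :=
  calc _ = 2 * (a * a - (t * a - n)) - 2 * (b * b - (t * b - n))
        + (t * a - a * t) - (t * b - b * t) := by noncomm_ring
    _ = 0 := by rw [ha, hb, hta.eq, htb.eq]; noncomm_ring

theorem sq_add_sq_of_same_quadratic (hta : Commute t a) (htb : Commute t b)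
    (ha : a * a = t * a - n) (hb : b * b = t * b - n) :
    (a - b) * (a - b) + (a + b - t) * (a + b - t) = t * t - 4 * n :=
  calc _ = 2 * (a * a - (t * a - n)) + 2 * (b * b - (t * b - n))
        + (t * a - a * t) + (t * b - b * t) + (t * t - 4 * n) := by noncomm_ring
    _ = t * t - 4 * n := by rw [ha, hb, hta.eq, htb.eq]; noncomm_ring

end SameQuadratic

namespace QuaternionAlgebra

variable {R : Type*} [CommRing R] {c₁ c₂ : R}

theorem eq_zero_of_mul_self_eq_coe_sq (h : ∀ x : ℍ[R, c₁, c₂], x ≠ 0 → IsUnit x)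
    {w : ℍ[R, c₁, c₂]} (hw : w.re = 0) {z : R} (hwz : w * w = ↑(z ^ 2)) : w = 0 := by
  have hfactor : (↑z + w) * (↑z - w) = 0 := by
    calc (↑z + w) * (↑z - w) = ↑z * ↑z - w * w + (w * ↑z - ↑z * w) := by noncomm_ring
      _ = 0 := by rw [hwz, coe_pow, sq, sub_self, coe_commutes, sub_self, add_zero]
  have hz : z = 0 := by
    by_cases hplus : (↑z + w : ℍ[R, c₁, c₂]) = 0
    · simpa [hw] using congrArg re hplus
    · have := ((h _ hplus).mul_right_eq_zero).mp hfactor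
      simpa [hw] using congrArg re this
  by_contra hw0
  exact hw0 (((h w hw0).mul_right_eq_zero).mp (by simpa [hz] using hwz))

theorem not_isSquare_left [Nontrivial R] (h : ∀ x : ℍ[R, c₁, c₂], x ≠ 0 → IsUnit x) :
    ¬ IsSquare c₁ := by
  rintro ⟨s, rfl⟩
  have := eq_zero_of_mul_self_eq_coe_sq h (w := ⟨0, 1, 0, 0⟩) rfl (z := s) (by ext <;> simp [sq])
  simpa using congrArg imI this

theorem not_isSquare_right [Nontrivial R] (h : ∀ x : ℍ[R, c₁, c₂], x ≠ 0 → IsUnit x) :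
    ¬ IsSquare c₂ := by
  rintro ⟨s, rfl⟩
  have := eq_zero_of_mul_self_eq_coe_sq h (w := ⟨0, 0, 1, 0⟩) rfl (z := s) (by ext <;> simp [sq])
  simpa using congrArg imJ this

variable {S : Type*} [CommRing S]

def mapRingHom (f : R →+* S) (c₁ c₂ : R) : ℍ[R, c₁, c₂] →+* ℍ[S, f c₁, f c₂] where
  toFun x := ⟨f x.re, f x.imI, f x.imJ, f x.imK⟩
  map_one' := by ext <;> simp
  map_mul' x y := by ext <;> simp
  map_zero' := by ext <;> simp
  map_add' x y := by ext <;> simp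

@[simp]
theorem re_mapRingHom (f : R →+* S) (x : ℍ[R, c₁, c₂]) : (mapRingHom f c₁ c₂ x).re = f x.re :=
  rfl

end QuaternionAlgebra

theorem PadicInt.exists_sq_eq_of_dvd_sub_one {p : ℕ} [Fact p.Prime] (hp : p ≠ 2) {c : ℤ}
    (hc : (p : ℤ) ∣ c - 1) : ∃ z : ℤ_[p], z ^ 2 = c := by
  have hnorm : ‖(Polynomial.X ^ 2 - Polynomial.C c).aeval (1 : ℤ_[p])‖ <
      ‖(Polynomial.derivative (Polynomial.X ^ 2 - Polynomial.C c)).aeval (1 : ℤ_[p])‖ ^ 2 := by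
    have h2 : ‖(2 : ℤ_[p])‖ = 1 := by
      simpa using PadicInt.norm_natCast_eq_one_iff.mpr
        ((Nat.coprime_primes Fact.out Nat.prime_two).mpr hp)
    have h1 : ‖((1 - c : ℤ) : ℤ_[p])‖ < 1 :=
      PadicInt.norm_intCast_lt_one_iff.mpr (dvd_sub_comm.mp hc)
    simpa [map_ofNat, h2] using h1
  obtain ⟨z, hz, -⟩ := hensels_lemma hnorm
  exact ⟨z, by simpa [sub_eq_zero] using hz⟩

theorem Int.exists_dvd_mul_sq_add_mul_sq_add_one {p : ℕ} [Fact p.Prime] (hp : p ≠ 2) {a b : ℤ}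
    (ha : ¬ (p : ℤ) ∣ a) (hb : ¬ (p : ℤ) ∣ b) :
    ∃ A B : ℤ, (p : ℤ) ∣ a * A ^ 2 + b * B ^ 2 + 1 := by
  have ha' : (a : ZMod p) ≠ 0 := by rwa [Ne, ZMod.intCast_zmod_eq_zero_iff_dvd]
  have hb' : (b : ZMod p) ≠ 0 := by rwa [Ne, ZMod.intCast_zmod_eq_zero_iff_dvd]
  have hcard : Fintype.card (ZMod p) % 2 = 1 := by
    rw [ZMod.card]
    exact Nat.odd_iff.mp ((Fact.out : p.Prime).odd_of_ne_two hp)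
  obtain ⟨x, y, hxy⟩ := FiniteField.exists_root_sum_quadratic
    (f := Polynomial.C (a : ZMod p) * Polynomial.X ^ 2)
    (g := Polynomial.C (b : ZMod p) * Polynomial.X ^ 2 + 1)
    (by compute_degree!) (by compute_degree!) hcard
  obtain ⟨A, rfl⟩ := ZMod.intCast_surjective x
  obtain ⟨B, rfl⟩ := ZMod.intCast_surjective y
  refine ⟨A, B, (ZMod.intCast_zmod_eq_zero_iff_dvd _ p).mp ?_⟩
  push_cast
  simpa [add_assoc] using hxy

theorem Padic.exists_sq_eq_neg_mul_sq_add_mul_sq {p : ℕ} [Fact p.Prime] (hp : p ≠ 2) {a b : ℤ}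
    (ha : ¬ (p : ℤ) ∣ a) (hb : ¬ (p : ℤ) ∣ b) :
    ∃ (A B : ℤ) (z : ℚ_[p]), z ≠ 0 ∧ z ^ 2 = ((-(a * A ^ 2 + b * B ^ 2) : ℤ) : ℚ_[p]) := by
  obtain ⟨A, B, hAB⟩ := Int.exists_dvd_mul_sq_add_mul_sq_add_one hp ha hb
  have hc : (p : ℤ) ∣ -(a * A ^ 2 + b * B ^ 2) - 1 := by
    rw [← neg_add', dvd_neg]
    exact hAB
  obtain ⟨z, hz⟩ := PadicInt.exists_sq_eq_of_dvd_sub_one hp hc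
  refine ⟨A, B, z, fun hz0 => ?_, by exact_mod_cast congrArg PadicInt.Coe.ringHom hz⟩
  rw [PadicInt.coe_eq_zero] at hz0
  rw [hz0, zero_pow two_ne_zero, eq_comm, Int.cast_eq_zero] at hz
  rw [hz, zero_sub, dvd_neg, ← Int.natCast_one, Int.natCast_dvd_natCast] at hc
  exact (Fact.out : p.Prime).not_dvd_one hc

variable {c₁ c₂ : ℚ}

theorem trd_add (x y : ℍ[ℚ, c₁, c₂]) : trd (x + y) = trd x + trd y := by
  simp only [trd, QuaternionAlgebra.re_add]; ring

theorem trd_sub (x y : ℍ[ℚ, c₁, c₂]) : trd (x - y) = trd x - trd y := by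
  simp only [trd, QuaternionAlgebra.re_sub]; ring

theorem trd_intCast (z : ℤ) : trd (z : ℍ[ℚ, c₁, c₂]) = 2 * z := by
  simp [trd]

theorem re_eq_zero_of_trd_eq_zero {x : ℍ[ℚ, c₁, c₂]} (hx : trd x = 0) : x.re = 0 := by
  simpa [trd] using hx

theorem mul_self_eq_trd_mul_sub_nrd (x : ℍ[ℚ, c₁, c₂]) : x * x = ↑(trd x) * x - ↑(nrd x) := by
  have htrd : x + star x = ↑(trd x) := by simp [QuaternionAlgebra.self_add_star', trd]
  calc x * x = x * (x + star x) - x * star x := by noncomm_ring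
    _ = ↑(trd x) * x - ↑(nrd x) := by
      rw [htrd, ← QuaternionAlgebra.coe_commutes, QuaternionAlgebra.mul_star_eq_coe]; rfl

theorem mul_self_eq_neg_nrd {x : ℍ[ℚ, c₁, c₂]} (hx : trd x = 0) : x * x = -↑(nrd x) := by
  rw [mul_self_eq_trd_mul_sub_nrd, hx, QuaternionAlgebra.coe_zero, zero_mul, zero_sub]

theorem mul_self_eq_of_trd_eq_of_nrd_eq {x : ℍ[ℚ, c₁, c₂]} {t n : ℤ} (ht : trd x = t)
    (hn : nrd x = n) : x * x = t * x - n := by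
  rw [mul_self_eq_trd_mul_sub_nrd, ht, hn, QuaternionAlgebra.coe_intCast,
    QuaternionAlgebra.coe_intCast]

theorem nrd_sub_add_nrd_add_sub {α α' : ℍ[ℚ, c₁, c₂]} {t n : ℤ} (ht : trd α = t)
    (hn : nrd α = n) (ht' : trd α' = t) (hn' : nrd α' = n) :
    nrd (α - α') + nrd (α + α' - (t : ℍ[ℚ, c₁, c₂])) = 4 * n - t ^ 2 := by
  have hsum := sq_add_sq_of_same_quadratic (Int.cast_commute t α) (Int.cast_commute t α')
    (mul_self_eq_of_trd_eq_of_nrd_eq ht hn) (mul_self_eq_of_trd_eq_of_nrd_eq ht' hn')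
  rw [mul_self_eq_neg_nrd (by rw [trd_sub, ht, ht', sub_self]),
    mul_self_eq_neg_nrd (by rw [trd_sub, trd_add, trd_intCast, ht, ht']; ring)] at hsum
  apply QuaternionAlgebra.coe_injective (c₁ := c₁) (c₂ := 0) (c₃ := c₂)
  push_cast
  rw [← neg_neg (_ + _), neg_add, hsum]
  noncomm_ring

theorem nrd_pos_of_neg (hc₁ : c₁ < 0) (hc₂ : c₂ < 0) {x : ℍ[ℚ, c₁, c₂]} (hx : x ≠ 0) :
    0 < nrd x := by
  have hnrd : nrd x = x.re ^ 2 + -c₁ * x.imI ^ 2 + -c₂ * x.imJ ^ 2 + c₁ * c₂ * x.imK ^ 2 := by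
    simp only [nrd, QuaternionAlgebra.re_mul, QuaternionAlgebra.re_star,
      QuaternionAlgebra.imI_star, QuaternionAlgebra.imJ_star, QuaternionAlgebra.imK_star]
    ring
  have h₀ := sq_nonneg x.re
  have h₁ : 0 ≤ -c₁ * x.imI ^ 2 := mul_nonneg (neg_nonneg.2 hc₁.le) (sq_nonneg _)
  have h₂ : 0 ≤ -c₂ * x.imJ ^ 2 := mul_nonneg (neg_nonneg.2 hc₂.le) (sq_nonneg _)
  have h₃ : 0 ≤ c₁ * c₂ * x.imK ^ 2 := mul_nonneg (mul_pos_of_neg_of_neg hc₁ hc₂).le (sq_nonneg _)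
  contrapose! hx
  ext
  · simpa using (by linarith : x.re ^ 2 = 0)
  · simpa [hc₁.ne] using (by linarith : -c₁ * x.imI ^ 2 = 0)
  · simpa [hc₂.ne] using (by linarith : -c₂ * x.imJ ^ 2 = 0)
  · simpa [hc₁.ne, hc₂.ne] using (by linarith : c₁ * c₂ * x.imK ^ 2 = 0)

theorem IsOrder.exists_intCast_eq_of_coe_mem {O : Subring ℍ[ℚ, c₁, c₂]} (hO : IsOrder O)
    {q : ℚ} (hq : (q : ℍ[ℚ, c₁, c₂]) ∈ O) : ∃ z : ℤ, (z : ℚ) = q := by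
  obtain ⟨e, he⟩ := hO
  have hspan : (subalgebraOfSubring O).toSubmodule = Submodule.span ℤ (Set.range e) := by
    ext x
    simp only [Subalgebra.mem_toSubmodule, mem_subalgebraOfSubring, he,
      Submodule.mem_span_range_iff_exists_fun, Int.cast_smul_eq_zsmul, eq_comm]
  have hint : IsIntegral ℤ (algebraMap ℚ ℍ[ℚ, c₁, c₂] q) :=
    IsIntegral.of_mem_of_fg _ (hspan ▸ Submodule.fg_span (Set.finite_range e)) _ hq
  rw [isIntegral_algebraMap_iff (algebraMap ℚ ℍ[ℚ, c₁, c₂]).injective] at hint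
  obtain ⟨z, hz⟩ := IsIntegrallyClosed.isIntegral_iff.mp hint
  exact ⟨z, by simpa using hz⟩

theorem IsOrder.exists_intCast_eq_nrd {O : Subring ℍ[ℚ, c₁, c₂]} (hO : IsOrder O)
    {x : ℍ[ℚ, c₁, c₂]} (hxO : x ∈ O) (hx : trd x = 0) : ∃ a : ℤ, (a : ℚ) = nrd x := by
  have hsq : x * x = ↑(-nrd x) := by rw [mul_self_eq_neg_nrd hx, QuaternionAlgebra.coe_neg]
  obtain ⟨z, hz⟩ := hO.exists_intCast_eq_of_coe_mem (hsq ▸ O.mul_mem hxO hxO)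
  exact ⟨-z, by push_cast; linarith⟩

theorem IsBpInfty.c₁_neg {p : ℕ} [Fact p.Prime] (hB : IsBpInfty p c₁ c₂) : c₁ < 0 := by
  have := QuaternionAlgebra.not_isSquare_left hB.1
  rw [Real.isSquare_iff, not_le] at this
  exact_mod_cast this

theorem IsBpInfty.c₂_neg {p : ℕ} [Fact p.Prime] (hB : IsBpInfty p c₁ c₂) : c₂ < 0 := by
  have := QuaternionAlgebra.not_isSquare_right hB.1
  rw [Real.isSquare_iff, not_le] at this
  exact_mod_cast this

theorem IsBpInfty.dvd_or_dvd_of_anticomm {p : ℕ} [Fact p.Prime] (hB : IsBpInfty p c₁ c₂)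
    (hp : p ≠ 2) {δ σ : ℍ[ℚ, c₁, c₂]} (hδ : trd δ = 0) (hσ : trd σ = 0)
    (hδσ : δ * σ + σ * δ = 0) {a b : ℤ} (ha : nrd δ = a) (hb : nrd σ = b) :
    (p : ℤ) ∣ a ∨ (p : ℤ) ∣ b := by
  by_contra! hab
  obtain ⟨A, B, z, hz0, hz⟩ := Padic.exists_sq_eq_neg_mul_sq_add_mul_sq hp hab.1 hab.2
  set w : ℍ[ℚ, c₁, c₂] := A • δ + B • σ
  have hw : w.re = 0 := by
    simp [w, re_eq_zero_of_trd_eq_zero hδ, re_eq_zero_of_trd_eq_zero hσ]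
  have hww : w * w = ((-(a * A ^ 2 + b * B ^ 2) : ℤ) : ℍ[ℚ, c₁, c₂]) := by
    calc w * w = (A * A) • (δ * δ) + (B * B) • (σ * σ) + (A * B) • (δ * σ + σ * δ) := by
          simp only [w, add_mul, mul_add, smul_mul_smul_comm, smul_add, mul_comm B A]
          abel
      _ = _ := by
          rw [mul_self_eq_neg_nrd hδ, mul_self_eq_neg_nrd hσ, ha, hb, hδσ,
            QuaternionAlgebra.coe_intCast, QuaternionAlgebra.coe_intCast, ← Int.cast_neg,
            ← Int.cast_neg]
          simp only [smul_zero, add_zero, zsmul_eq_mul, ← Int.cast_mul, ← Int.cast_add]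
          congr 1
          ring
  set φ := QuaternionAlgebra.mapRingHom (Rat.castHom ℚ_[p]) c₁ c₂
  have hφw : φ w * φ w = ↑(z ^ 2) := by
    rw [← map_mul, hww, map_intCast, hz, QuaternionAlgebra.coe_intCast]
  have hdiv : ∀ x : ℍ[ℚ_[p], Rat.castHom ℚ_[p] c₁, Rat.castHom ℚ_[p] c₂], x ≠ 0 → IsUnit x :=
    hB.2.1
  have := QuaternionAlgebra.eq_zero_of_mul_self_eq_coe_sq hdiv
    ((QuaternionAlgebra.re_mapRingHom _ w).trans (by rw [hw, map_zero])) hφw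
  rw [this, mul_zero] at hφw
  exact hz0 <| pow_eq_zero_iff two_ne_zero |>.mp <|
    QuaternionAlgebra.coe_injective (hφw.symm.trans QuaternionAlgebra.coe_zero.symm)

theorem IsBpInfty.le_nrd_add_nrd_of_anticomm {p : ℕ} [Fact p.Prime] (hB : IsBpInfty p c₁ c₂)
    {O : Subring ℍ[ℚ, c₁, c₂]} (hO : IsOrder O) {δ σ : ℍ[ℚ, c₁, c₂]} (hδO : δ ∈ O) (hσO : σ ∈ O)
    (hδ : trd δ = 0) (hσ : trd σ = 0) (hδ0 : δ ≠ 0) (hσ0 : σ ≠ 0)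
    (hδσ : δ * σ + σ * δ = 0) : (p : ℚ) ≤ nrd δ + nrd σ := by
  obtain ⟨a, ha⟩ := hO.exists_intCast_eq_nrd hδO hδ
  obtain ⟨b, hb⟩ := hO.exists_intCast_eq_nrd hσO hσ
  have ha0 : 0 < a := by exact_mod_cast ha ▸ nrd_pos_of_neg hB.c₁_neg hB.c₂_neg hδ0
  have hb0 : 0 < b := by exact_mod_cast hb ▸ nrd_pos_of_neg hB.c₁_neg hB.c₂_neg hσ0
  rw [← ha, ← hb]
  norm_cast
  by_contra! hlt
  rcases hB.dvd_or_dvd_of_anticomm (by omega) hδ hσ hδσ ha.symm hb.symm with h | h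
  · linarith [Int.le_of_dvd ha0 h]
  · linarith [Int.le_of_dvd hb0 h]

theorem primitive_embedding_unique_up_to_conj_general (p : ℕ) [Fact p.Prime]
    (c₁ c₂ : ℚ) (hB : IsBpInfty p c₁ c₂)
    (O : Subring ℍ[ℚ, c₁, c₂]) (hO : IsMaximalOrder O)
    (α α' : ℍ[ℚ, c₁, c₂]) (t n : ℤ)
    (ht : trd α = (t : ℚ)) (hn : nrd α = (n : ℚ))
    (ht' : trd α' = (t : ℚ)) (hn' : nrd α' = (n : ℚ))
    (Δ : ℤ) (hΔ : Δ = t ^ 2 - 4 * n) (hsmall : |Δ| < (p : ℤ))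
    (hprim : IsPrimitiveEmbedding O α) (hprim' : IsPrimitiveEmbedding O α') :
    α' = α ∨ α' = (t : ℍ[ℚ, c₁, c₂]) - α := by
  by_contra! hne
  have hp := hB.le_nrd_add_nrd_of_anticomm hO.1 (O.sub_mem hprim.1 hprim'.1)
    (O.sub_mem (O.add_mem hprim.1 hprim'.1) (intCast_mem O t))
    (by rw [trd_sub, ht, ht', sub_self]) (by rw [trd_sub, trd_add, trd_intCast, ht, ht']; ring)
    (sub_ne_zero.2 hne.1.symm) (fun h => hne.2 (eq_sub_of_add_eq' (sub_eq_zero.1 h)))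
    (anticomm_of_same_quadratic (Int.cast_commute t α) (Int.cast_commute t α')
      (mul_self_eq_of_trd_eq_of_nrd_eq ht hn) (mul_self_eq_of_trd_eq_of_nrd_eq ht' hn'))
  rw [nrd_sub_add_nrd_add_sub ht hn ht' hn'] at hp
  have hpΔ : (p : ℤ) ≤ 4 * n - t ^ 2 := by exact_mod_cast hp
  linarith [neg_le_abs Δ]

/-- Let `𝒪` be a maximal order in `B_{p,∞}` (`p` odd) and `𝔒 = ℤ[ω]` an imaginary
quadratic order (generator of trace `t`, norm `n`, discriminant `Δ = t² - 4n`) with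
`|Δ| < p`.  If `ι, ι' : 𝔒 ↪ 𝒪` are two primitive embeddings, given by the images
`α = ι(ω)` and `α' = ι'(ω)`, then `ι' = ι` or `ι' = ῑ`, i.e. `α' = α` or
`α' = t - α` (the image of the conjugate `ω̄ = t - ω`). -/
theorem primitive_embedding_unique_up_to_conj (p : ℕ) [Fact p.Prime] (hodd : Odd p)
    (c₁ c₂ : ℚ) (hB : IsBpInfty p c₁ c₂)
    (O : Subring ℍ[ℚ, c₁, c₂]) (hO : IsMaximalOrder O)
    (α α' : ℍ[ℚ, c₁, c₂]) (t n : ℤ)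
    (ht : trd α = (t : ℚ)) (hn : nrd α = (n : ℚ))
    (ht' : trd α' = (t : ℚ)) (hn' : nrd α' = (n : ℚ))
    (Δ : ℤ) (hΔ : Δ = t ^ 2 - 4 * n) (hneg : Δ < 0) (hsmall : |Δ| < (p : ℤ))
    (hprim : IsPrimitiveEmbedding O α) (hprim' : IsPrimitiveEmbedding O α') :
    α' = α ∨ α' = (t : ℍ[ℚ, c₁, c₂]) - α :=
  primitive_embedding_unique_up_to_conj_general p c₁ c₂ hB O hO α α' t n ht hn ht' hn' Δ hΔ hsmall
    hprim hprim'
end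

section
/- Let 𝒪 be an order in a quaternion algebra over ℚ, and define the discriminant form Δ : 𝒪/ℤ → ℚ by Δ(α̃) = Tr(α)² − 4·nrd(α) for any representative α of the class α̃ (this is well-defined). An element α ∈ 𝒪 is a primitive solution of Δ(α) = d (i.e., the class α̃ is not of the form b·β̃ for β̃ ∈ 𝒪/ℤ and integer b > 1) if and only if the embedding ℤ[α] ⊆ 𝒪 is primitive, i.e., there is no β ∈ (ℚ[α] ∩ 𝒪) \ ℤ[α]. -/
open Quaternion

/-! Since `Δ(α) ≠ 0`, the elements `1, α` are linearly independent over `ℚ`, and since the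
elements of an order are integral, `𝒪 ∩ ℚ = ℤ`. Both conditions then say that every element
`u + vα` of `𝒪 ∩ ℚ[α]` has `v ∈ ℤ`. If `α = m + bβ` with `b > 1`, then `β = (α - m)/b` has
`v = 1/b`. Conversely, if `u + vα ∈ 𝒪` with `v ∉ ℤ`, Bézout for the numerator and denominator
`b > 1` of `v` gives `γ = u' + α/b ∈ 𝒪`, and `bγ - α = bu' ∈ 𝒪 ∩ ℚ = ℤ`, so `α ≡ bγ` modulo `ℤ`. -/

section RationalAlgebra

variable {A : Type*} [Ring A] [Algebra ℚ A]

theorem exists_intCast_eq_of_smul_one_mem [Nontrivial A] {O : Subring A}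
    (hfg : (Subalgebra.toSubmodule (subalgebraOfSubring O)).FG) (q : ℚ)
    (hq : q • (1 : A) ∈ O) : ∃ n : ℤ, (n : ℚ) = q := by
  have hint : IsIntegral ℤ (algebraMap ℚ A q) := by
    rw [Algebra.algebraMap_eq_smul_one]
    exact IsIntegral.of_mem_of_fg _ hfg _ (mem_subalgebraOfSubring.mpr hq)
  exact IsIntegrallyClosed.isIntegral_iff.mp
    ((isIntegral_algebraMap_iff (algebraMap ℚ A).injective).mp hint)

variable {O : Subring A} {α : A}

theorem not_exists_int_coeffs_of_eq_intCast_smul_one_add_smul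
    (hli : LinearIndependent ℚ ![1, α]) {b m : ℤ} (hb : 1 < b) {β : A}
    (h : α = (m : ℚ) • (1 : A) + (b : ℚ) • β) :
    ¬ ∃ u v : ℤ, β = (u : ℚ) • (1 : A) + (v : ℚ) • α := by
  rintro ⟨u, v, rfl⟩
  have hcoeff := hli.eq_of_pair (s := 0) (t := 1) (s' := m + b * u) (t' := b * v)
    (by linear_combination (norm := module) h)
  have hbv : b * v = 1 := by exact_mod_cast hcoeff.2.symm
  have := Int.le_of_dvd one_pos ⟨v, hbv.symm⟩
  omega

theorem exists_int_coeffs_of_smul_one_add_intCast_smul_mem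
    (hZ : ∀ q : ℚ, q • (1 : A) ∈ O → ∃ n : ℤ, (n : ℚ) = q) (hα : α ∈ O) {u : ℚ} {n : ℤ}
    (h : u • (1 : A) + (n : ℚ) • α ∈ O) :
    ∃ u' v' : ℤ, u • (1 : A) + (n : ℚ) • α = (u' : ℚ) • (1 : A) + (v' : ℚ) • α := by
  have hu : u • (1 : A) = (u • 1 + (n : ℚ) • α) - n • α := by
    rw [Int.cast_smul_eq_zsmul]; abel
  obtain ⟨k, rfl⟩ := hZ u (hu ▸ O.sub_mem h (O.zsmul_mem hα n))
  exact ⟨k, n, rfl⟩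

theorem exists_smul_one_add_inv_den_smul_mem (hα : α ∈ O) {u v : ℚ}
    (h : u • (1 : A) + v • α ∈ O) : ∃ u' : ℚ, u' • (1 : A) + (v.den : ℚ)⁻¹ • α ∈ O := by
  obtain ⟨s, t, hst⟩ : IsCoprime v.num v.den := Int.isCoprime_iff_gcd_eq_one.mpr v.reduced
  have hcoeff : (s : ℚ) * v + t = (v.den : ℚ)⁻¹ := by
    refine eq_inv_of_mul_eq_one_left ?_
    rw [add_mul, mul_assoc, Rat.mul_den_eq_num]
    exact_mod_cast hst
  refine ⟨s * u, ?_⟩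
  have hmem := O.add_mem (O.zsmul_mem h s) (O.zsmul_mem hα t)
  rw [← Int.cast_smul_eq_zsmul ℚ, ← Int.cast_smul_eq_zsmul ℚ] at hmem
  rw [← hcoeff]
  convert hmem using 1
  module

theorem exists_eq_intCast_smul_one_add_smul_of_smul_one_add_inv_smul_mem
    (hZ : ∀ q : ℚ, q • (1 : A) ∈ O → ∃ n : ℤ, (n : ℚ) = q) (hα : α ∈ O) {b : ℕ} (hb : b ≠ 0)
    {u : ℚ} (h : u • (1 : A) + (b : ℚ)⁻¹ • α ∈ O) :
    ∃ m : ℤ, α = (m : ℚ) • (1 : A) + (b : ℚ) • (u • (1 : A) + (b : ℚ)⁻¹ • α) := by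
  have hbγ : (b : ℚ) • (u • (1 : A) + (b : ℚ)⁻¹ • α) = (b * u) • (1 : A) + α := by
    rw [smul_add, smul_smul, smul_smul, mul_inv_cancel₀ (Nat.cast_ne_zero.mpr hb), one_smul]
  have hmem := O.sub_mem (O.nsmul_mem h b) hα
  rw [← Nat.cast_smul_eq_nsmul ℚ, hbγ, add_sub_cancel_right] at hmem
  obtain ⟨k, hk⟩ := hZ _ hmem
  refine ⟨-k, ?_⟩
  rw [hbγ, Int.cast_neg, hk]
  module

end RationalAlgebra

section QuaternionAlgebra

variable {c₁ c₂ : ℚ}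

theorem IsOrder.fg_toSubmodule {O : Subring ℍ[ℚ, c₁, c₂]} (hO : IsOrder O) :
    (Subalgebra.toSubmodule (subalgebraOfSubring O)).FG := by
  obtain ⟨e, he⟩ := hO
  have hspan :
      Subalgebra.toSubmodule (subalgebraOfSubring O) = Submodule.span ℤ (Set.range e) := by
    ext x
    rw [Subalgebra.mem_toSubmodule, mem_subalgebraOfSubring, he,
      Submodule.mem_span_range_iff_exists_fun]
    simp only [Int.cast_smul_eq_zsmul, eq_comm]
  exact hspan ▸ Submodule.fg_span (Set.finite_range e)

theorem trd_sq_sub_four_mul_nrd_smul_one (q : ℚ) :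
    trd (q • 1 : ℍ[ℚ, c₁, c₂]) ^ 2 - 4 * nrd (q • 1 : ℍ[ℚ, c₁, c₂]) = 0 := by
  simp only [trd, nrd, QuaternionAlgebra.re_smul, QuaternionAlgebra.re_one, star_rat_smul,
    star_one, Algebra.mul_smul_comm, smul_eq_mul, mul_one]
  ring

theorem linearIndependent_one_of_trd_sq_sub_four_mul_nrd_ne_zero {α : ℍ[ℚ, c₁, c₂]}
    (h : trd α ^ 2 - 4 * nrd α ≠ 0) : LinearIndependent ℚ ![1, α] :=
  (LinearIndependent.pair_iff' one_ne_zero).mpr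
    fun q hq => h (hq ▸ trd_sq_sub_four_mul_nrd_smul_one q)

end QuaternionAlgebra

/-- Let `𝒪` be an order in a quaternion algebra over `ℚ` and `α ∈ 𝒪` with
`Δ(α) = Tr(α)² − 4·nrd(α) = d ≠ 0`.  Then `α` is a *primitive solution* of
`Δ(α) = d` (the class of `α` in `𝒪/ℤ` is not `b` times another class, for an
integer `b > 1`) if and only if the embedding `ℤ[α] ⊆ 𝒪` is primitive (there is
no `β ∈ (ℚ[α] ∩ 𝒪) \ ℤ[α]`). -/
theorem primitive_solution_iff_primitive_embedding (c₁ c₂ : ℚ)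
    (O : Subring ℍ[ℚ, c₁, c₂]) (hO : IsOrder O)
    (α : ℍ[ℚ, c₁, c₂]) (hα : α ∈ O) (d : ℤ)
    (hd : trd α ^ 2 - 4 * nrd α = (d : ℚ)) (hd0 : d ≠ 0) :
    (¬ ∃ (b : ℤ) (β : ℍ[ℚ, c₁, c₂]), β ∈ O ∧ 1 < b ∧
        ∃ m : ℤ, α = (m : ℚ) • (1 : ℍ[ℚ, c₁, c₂]) + (b : ℚ) • β) ↔
    ¬ ∃ β : ℍ[ℚ, c₁, c₂], β ∈ O ∧
        (∃ u v : ℚ, β = u • (1 : ℍ[ℚ, c₁, c₂]) + v • α) ∧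
        ¬ ∃ u v : ℤ, β = (u : ℚ) • (1 : ℍ[ℚ, c₁, c₂]) + (v : ℚ) • α := by
  have hli : LinearIndependent ℚ ![1, α] :=
    linearIndependent_one_of_trd_sq_sub_four_mul_nrd_ne_zero (hd ▸ Int.cast_ne_zero.mpr hd0)
  have hZ := exists_intCast_eq_of_smul_one_mem hO.fg_toSubmodule
  apply not_congr
  constructor
  · rintro ⟨b, β, hβ, hb, m, h⟩
    have hb0 : (b : ℚ) ≠ 0 := by positivity
    refine ⟨β, hβ, ⟨-(m / b), (b : ℚ)⁻¹, ?_⟩,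
      not_exists_int_coeffs_of_eq_intCast_smul_one_add_smul hli hb h⟩
    rw [h, smul_add, inv_smul_smul₀ hb0, smul_smul]
    module
  · rintro ⟨_, hβ, ⟨u, v, rfl⟩, hnot⟩
    have hden : v.den ≠ 1 := fun h1 => hnot <| by
      rw [← (Rat.den_eq_one_iff v).mp h1] at hβ ⊢
      exact exists_int_coeffs_of_smul_one_add_intCast_smul_mem hZ hα hβ
    obtain ⟨u', hγ⟩ := exists_smul_one_add_inv_den_smul_mem hα hβ
    obtain ⟨m, hm⟩ := exists_eq_intCast_smul_one_add_smul_of_smul_one_add_inv_smul_mem hZ hα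
      v.den_nz hγ
    exact ⟨v.den, _, hγ, by have := v.den_nz; omega, m, hm⟩
end
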